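/- arXiv:1605.06087 — 6 statements merged into one kernel-verified Lean document; each statement's English description precedes it below -/
import Mathlib

section
/- The n-th Catalan number c_n = (1/n)·C(2n−2, n−1) is odd if and only if n is a power of 2 (i.e., n = 2^m for some m ≥ 0). -/
/-!
Reducing Segner's recurrence `C (n + 1) = ∑_{i + j = n} C i * C j` (with `C = catalan`) modulo 2,
the terms `(i, j)` and `(j, i)` cancel, so only a middle term can survive: `C (2k + 2)` is even
and `C (2k + 1) ≡ C k ^ 2 ≡ C k`. Hence `C k` is odd exactly when `k + 1` is a power of two.
-/

open Finset

namespace CharTwo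

theorem sum_eq_zero_of_swap_mem {R α : Type*} [Semiring R] [CharP R 2] {s : Finset (α × α)}
    {g : α × α → R} (hs : ∀ p ∈ s, p.swap ∈ s) (hdiag : ∀ p ∈ s, p.1 ≠ p.2)
    (hg : ∀ p, g p.swap = g p) : ∑ p ∈ s, g p = 0 :=
  sum_involution (fun p _ ↦ p.swap) (fun p _ ↦ by rw [hg, add_self_eq_zero])
    (fun p hp _ h ↦ hdiag p hp (congrArg Prod.snd h)) hs (fun p _ ↦ p.swap_swap)

variable {R : Type*} [CommSemiring R] [CharP R 2]

theorem sum_antidiagonal_mul_eq_zero_of_odd (f : ℕ → R) {n : ℕ} (hn : Odd n) :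
    ∑ ij ∈ antidiagonal n, f ij.1 * f ij.2 = 0 :=
  sum_eq_zero_of_swap_mem (fun _ ↦ HasAntidiagonal.swap_mem_antidiagonal.mpr)
    (fun p hp hdiag ↦ by
      rw [HasAntidiagonal.mem_antidiagonal, hdiag] at hp
      exact Nat.not_even_iff_odd.mpr hn ⟨p.2, hp.symm⟩)
    (fun _ ↦ mul_comm _ _)

theorem sum_antidiagonal_two_mul_mul (f : ℕ → R) (k : ℕ) :
    ∑ ij ∈ antidiagonal (2 * k), f ij.1 * f ij.2 = f k * f k := by
  have hmid : (k, k) ∈ antidiagonal (2 * k) :=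
    HasAntidiagonal.mem_antidiagonal.mpr (two_mul k).symm
  have hrest : ∑ ij ∈ (antidiagonal (2 * k)).erase (k, k), f ij.1 * f ij.2 = 0 := by
    refine sum_eq_zero_of_swap_mem (fun p hp ↦ ?_) (fun p hp hdiag ↦ ?_)
      (fun _ ↦ mul_comm _ _)
    · obtain ⟨hne, hp⟩ := mem_erase.mp hp
      exact mem_erase.mpr ⟨fun h ↦ hne (by simpa using congrArg Prod.swap h),
        HasAntidiagonal.swap_mem_antidiagonal.mpr hp⟩
    · obtain ⟨hne, hp⟩ := mem_erase.mp hp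
      rw [HasAntidiagonal.mem_antidiagonal] at hp
      exact hne (Prod.ext (by omega) (by omega))
  rw [← add_sum_erase _ _ hmid, hrest, add_zero]

end CharTwo

theorem even_catalan_two_mul_add_two (k : ℕ) : Even (catalan (2 * k + 2)) := by
  rw [← ZMod.natCast_eq_zero_iff_even, catalan_succ']
  push_cast
  exact CharTwo.sum_antidiagonal_mul_eq_zero_of_odd (fun i ↦ (catalan i : ZMod 2))
    (odd_two_mul_add_one k)

theorem odd_catalan_two_mul_add_one_iff (k : ℕ) :
    Odd (catalan (2 * k + 1)) ↔ Odd (catalan k) := by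
  rw [← ZMod.natCast_eq_one_iff_odd, catalan_succ']
  push_cast
  rw [CharTwo.sum_antidiagonal_two_mul_mul (fun i ↦ (catalan i : ZMod 2)), ← Nat.cast_mul,
    ZMod.natCast_eq_one_iff_odd, Nat.odd_mul, and_self]

theorem exists_two_mul_eq_two_pow_iff (a : ℕ) :
    (∃ m, 2 * a = 2 ^ m) ↔ ∃ m, a = 2 ^ m := by
  constructor
  · rintro ⟨_ | m, h⟩
    · omega
    · exact ⟨m, by rw [pow_succ'] at h; omega⟩
  · rintro ⟨m, rfl⟩
    exact ⟨m + 1, (pow_succ' 2 m).symm⟩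

theorem not_exists_two_mul_add_three_eq_two_pow (j : ℕ) : ¬ ∃ m, 2 * j + 3 = 2 ^ m := by
  rintro ⟨_ | m, h⟩
  · omega
  · rw [pow_succ'] at h
    omega

theorem odd_catalan_iff (k : ℕ) : Odd (catalan k) ↔ ∃ m, k + 1 = 2 ^ m := by
  induction k using Nat.evenOddRec with
  | h0 => exact iff_of_true (by simp) ⟨0, rfl⟩
  | h_even n ih =>
    rcases n with _ | j
    · exact ih
    · exact iff_of_false (Nat.not_odd_iff_even.mpr (even_catalan_two_mul_add_two j))
        (not_exists_two_mul_add_three_eq_two_pow j)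
  | h_odd n ih =>
    rw [odd_catalan_two_mul_add_one_iff, ih, ← exists_two_mul_eq_two_pow_iff]
    simp only [mul_add, mul_one]

-- Mathlib's `catalan` is indexed from 0, so `c n = catalan (n - 1)`.
/-- The `n`-th Catalan number `c_n = (1/n)·C(2n−2,n−1) = catalan (n-1)` (for `n ≥ 1`)
is odd if and only if `n` is a power of 2. -/
theorem catalan_odd_iff_pow_two (n : ℕ) (hn : 1 ≤ n) :
    Odd (catalan (n - 1)) ↔ ∃ m : ℕ, n = 2 ^ m := by
  rw [odd_catalan_iff, Nat.sub_add_cancel hn]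
end

section
/- Let p be prime, E ∈ F_p[x,y] a nonzero polynomial with d = deg_y E ≥ 1, and f ∈ F_p[[x]] with E(x, f(x)) = 0. Then the d+1 power series f(x), f(x^p), f(x^{p^2}), ..., f(x^{p^d}) are linearly dependent over the field of rational functions F_p(x). -/
/-!
Over `𝔽_p` the Frobenius is the identity on coefficients, so `f(x^{p^i}) = f(x)^{p^i}`. Embedding
`𝔽_p⟦x⟧` into the Laurent series field, `f` becomes algebraic of degree at most `d` over
`𝔽_p(x)`, so all the `f^{p^i}` lie in the `≤ d`-dimensional space `𝔽_p(x)[f]`. Hence `d + 1` of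
them are linearly dependent over `𝔽_p(x)`, and clearing denominators gives a dependence over
`𝔽_p[x]`.
-/

open PowerSeries

/-- Substitution of `x^q` into a formal power series: `(psub q z)(x) = z(x^q)`. -/
noncomputable def psub {R : Type*} [Semiring R] (q : ℕ) (z : PowerSeries R) : PowerSeries R :=
  PowerSeries.mk fun n => if q ∣ n then PowerSeries.coeff (R := R) (n / q) z else 0

/-- The section operator `S_r` : sends `Σ z_n x^n` to `Σ z_{pn+r} x^n`. -/
noncomputable def sect {R : Type*} [Semiring R] (p r : ℕ) (z : PowerSeries R) : PowerSeries R :=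
  PowerSeries.mk fun n => PowerSeries.coeff (R := R) (p * n + r) z

/-- The `x`-degree of a polynomial `E ∈ R[x][y]` (outer variable is `y`). -/
noncomputable def degX {R : Type*} [CommSemiring R] (E : Polynomial (Polynomial R)) : ℕ :=
  E.support.sup fun n => (E.coeff n).natDegree

open Polynomial LaurentSeries
open scoped RatFunc

theorem psub_eq_expand {R : Type*} [CommRing R] {q : ℕ} (hq : q ≠ 0) (f : R⟦X⟧) :
    psub q f = expand q hq f := by
  ext n
  simp [psub, PowerSeries.coeff_expand]

theorem psub_prime_pow_eq_pow {p : ℕ} [Fact p.Prime] (n : ℕ) (f : (ZMod p)⟦X⟧) :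
    psub (p ^ n) f = f ^ p ^ n := by
  have hp : p ≠ 0 := (Fact.out : p.Prime).ne_zero
  have hfrob : iterateFrobenius (ZMod p) p n = RingHom.id (ZMod p) :=
    RingHom.ext fun a => by simp [iterateFrobenius_def, ZMod.pow_card_pow]
  rw [psub_eq_expand (pow_ne_zero n hp), ← MvPowerSeries.map_iterateFrobenius_expand p hp f n,
    hfrob, MvPowerSeries.map_id]
  rfl

theorem Algebra.not_linearIndependent_of_aeval_eq_zero {K L ι : Type*} [Field K] [CommRing L]
    [Algebra K L] [Fintype ι] {x : L} {P : K[X]} (hP : P ≠ 0) (hx : aeval x P = 0)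
    {v : ι → L} (hv : ∀ i, v i ∈ Algebra.adjoin K {x}) (hcard : P.natDegree < Fintype.card ι) :
    ¬ LinearIndependent K v := by
  intro hli
  have hint : IsIntegral K x := _root_.IsAlgebraic.isIntegral ⟨P, hP, hx⟩
  have := (Algebra.adjoin.powerBasis hint).finite
  have hspan : Submodule.span K (Set.range v) ≤ Subalgebra.toSubmodule (Algebra.adjoin K {x}) :=
    Submodule.span_le.mpr (Set.range_subset_iff.mpr hv)
  have : Fintype.card ι ≤ P.natDegree :=
    calc Fintype.card ι = Module.finrank K (Submodule.span K (Set.range v)) :=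
          (finrank_span_eq_card hli).symm
      _ ≤ Module.finrank K (Algebra.adjoin K {x}) := Submodule.finrank_mono hspan
      _ = (minpoly K x).natDegree :=
          (Algebra.adjoin.powerBasis hint).finrank.trans (Algebra.adjoin.powerBasis_dim hint)
      _ ≤ P.natDegree := natDegree_le_natDegree (minpoly.degree_le_of_ne_zero K x hP hx)
  omega

theorem IsFractionRing.not_linearIndependent_of_aeval_eq_zero {A K L ι : Type*} [CommRing A]
    [IsDomain A] [Field K] [Algebra A K] [IsFractionRing A K] [CommRing L] [Algebra A L]
    [Algebra K L] [IsScalarTower A K L] [Fintype ι] {x : L} {P : A[X]} (hP : P ≠ 0)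
    (hx : aeval x P = 0) {v : ι → L} (hv : ∀ i, v i ∈ Algebra.adjoin A {x})
    (hcard : P.natDegree < Fintype.card ι) :
    ¬ LinearIndependent A v := by
  have hinj := IsFractionRing.injective A K
  have hadjoin : Algebra.adjoin A {x} ≤ (Algebra.adjoin K {x}).restrictScalars A :=
    Algebra.adjoin_le (Set.singleton_subset_iff.mpr (Algebra.self_mem_adjoin_singleton K x))
  rw [LinearIndependent.iff_fractionRing A K]
  exact Algebra.not_linearIndependent_of_aeval_eq_zero ((Polynomial.map_ne_zero_iff hinj).mpr hP)
    (by rwa [aeval_map_algebraMap]) (fun i => hadjoin (hv i))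
    (by rwa [natDegree_map_eq_of_injective hinj])

instance {R S : Type*} [CommSemiring R] [CommSemiring S] [Algebra S R⟦X⟧] :
    IsScalarTower S R⟦X⟧ R⸨X⸩ :=
  IsScalarTower.of_algebraMap_eq fun _ => rfl

theorem PowerSeries.not_linearIndependent_of_aeval_eq_zero {F ι : Type*} [Field F] [Fintype ι]
    {f : F⟦X⟧} {P : F[X][X]} (hP : P ≠ 0) (hf : Polynomial.aeval f P = 0) {v : ι → F⟦X⟧}
    (hv : ∀ i, v i ∈ Algebra.adjoin F[X] {f}) (hcard : P.natDegree < Fintype.card ι) :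
    ¬ LinearIndependent F[X] v := by
  let φ := IsScalarTower.toAlgHom F[X] F⟦X⟧ F⸨X⸩
  have hv' : ∀ i, φ (v i) ∈ Algebra.adjoin F[X] {φ f} := fun i => by
    rw [← AlgHom.map_adjoin_singleton]
    exact Subalgebra.mem_map.mpr ⟨v i, hv i, rfl⟩
  intro hli
  exact IsFractionRing.not_linearIndependent_of_aeval_eq_zero (K := RatFunc F) hP
    (by rw [aeval_algHom_apply, hf, map_zero]) hv' hcard
    (hli.map' φ.toLinearMap (LinearMap.ker_eq_bot.mpr HahnSeries.ofPowerSeries_injective))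

theorem frobenius_powers_linearly_dependent_general (p : ℕ) (hp : p.Prime)
    (E : Polynomial (Polynomial (ZMod p))) (hE : E ≠ 0)
    (f : PowerSeries (ZMod p))
    (hf : Polynomial.eval₂ ((Polynomial.coeToPowerSeries.ringHom : Polynomial (ZMod p) →+* PowerSeries (ZMod p))) f E = 0) :
    ∃ dcoef : Fin (E.natDegree + 1) → Polynomial (ZMod p),
      (∃ i, dcoef i ≠ 0) ∧
      ∑ i, (dcoef i : PowerSeries (ZMod p)) * psub (p ^ (i : ℕ)) f = 0 := by
  have : Fact p.Prime := ⟨hp⟩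
  have hcoe : algebraMap (ZMod p)[X] (ZMod p)⟦X⟧ = coeToPowerSeries.ringHom :=
    RingHom.ext fun _ => rfl
  have hli : ¬ LinearIndependent (ZMod p)[X]
      fun i : Fin (E.natDegree + 1) => psub (p ^ (i : ℕ)) f :=
    PowerSeries.not_linearIndependent_of_aeval_eq_zero hE (by rwa [aeval_def, hcoe])
      (fun i => psub_prime_pow_eq_pow (i : ℕ) f ▸
        pow_mem (Algebra.self_mem_adjoin_singleton _ f) _) (by simp)
  obtain ⟨dcoef, hsum, i, hi⟩ := Fintype.not_linearIndependent_iff.mp hli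
  refine ⟨dcoef, ⟨i, hi⟩, ?_⟩
  simpa only [Algebra.smul_def, hcoe, coeToPowerSeries.ringHom_apply] using hsum

/-- If `E ∈ F_p[x,y]` is nonzero with `d = deg_y E ≥ 1` and `f ∈ F_p[[x]]` satisfies
`E(x, f(x)) = 0`, then `f(x), f(x^p), …, f(x^{p^d})` are linearly dependent over `F_p(x)`:
there are polynomials `d_0, …, d_d ∈ F_p[x]`, not all zero, with `Σ d_i(x) f(x^{p^i}) = 0`. -/
theorem frobenius_powers_linearly_dependent (p : ℕ) (hp : p.Prime)
    (E : Polynomial (Polynomial (ZMod p))) (hE : E ≠ 0) (hd : 1 ≤ E.natDegree)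
    (f : PowerSeries (ZMod p))
    (hf : Polynomial.eval₂ ((Polynomial.coeToPowerSeries.ringHom : Polynomial (ZMod p) →+* PowerSeries (ZMod p))) f E = 0) :
    ∃ dcoef : Fin (E.natDegree + 1) → Polynomial (ZMod p),
      (∃ i, dcoef i ≠ 0) ∧
      ∑ i, (dcoef i : PowerSeries (ZMod p)) * psub (p ^ (i : ℕ)) f = 0 :=
  frobenius_powers_linearly_dependent_general p hp E hE f hf
end

section
/- Let p be prime and suppose f ∈ F_p[[x]] satisfies a Mahler equation f(x) + d_1(x) f(x^p) + ... + d_k(x) f(x^{p^k}) = b(x) with b, d_1, ..., d_k ∈ F_p[x] of degree at most D. Then the F_p-vector space V = {α + β_0 f(x) + β_1 f(x^p) + ... + β_k f(x^{p^k}) : α, β_i ∈ F_p[x], deg α, deg β_i ≤ D} is closed under every section operator S_r, r ∈ {0, ..., p−1}. -/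
/-!
Substituting the Mahler equation for the `i = 0` term writes an element of `V` as
`A + Σ_{i<k} G_i(x) f(x^{p^{i+1}})` with `deg A, deg G_i ≤ 2D`. Since `S_r (g(x) h(x^p)) = S_r(g) h`,
applying `S_r` gives `S_r(A) + Σ_{i<k} S_r(G_i) f(x^{p^i})`, and `S_r` sends a polynomial of degree
`< p (D + 1)`, in particular one of degree `≤ 2D`, to one of degree `≤ D`.
-/

open PowerSeries

open Polynomial

section Operators

variable {R : Type*} [Semiring R]

lemma psub_one (z : R⟦X⟧) : psub 1 z = z := by
  ext n; simp [psub]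

lemma psub_psub (a b : ℕ) (z : R⟦X⟧) : psub a (psub b z) = psub (a * b) z := by
  ext n
  simp only [psub, coeff_mk]
  by_cases ha : a ∣ n
  · simp only [ha, if_true, Nat.dvd_div_iff_mul_dvd ha, Nat.div_div_eq_div_mul]
  · have hab : ¬ a * b ∣ n := fun h => ha ((dvd_mul_right a b).trans h)
    simp only [ha, hab, if_false]

lemma psub_pow_succ (p n : ℕ) (z : R⟦X⟧) : psub (p ^ (n + 1)) z = psub p (psub (p ^ n) z) := by
  rw [psub_psub, pow_succ']

lemma sect_add (p r : ℕ) (y z : R⟦X⟧) : sect p r (y + z) = sect p r y + sect p r z := by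
  ext n; simp [sect]

lemma sect_sum (p r : ℕ) {ι : Type*} (s : Finset ι) (z : ι → R⟦X⟧) :
    sect p r (∑ i ∈ s, z i) = ∑ i ∈ s, sect p r (z i) := by
  ext n; simp [sect]

lemma eq_mul_sub_add_of_add_mul_eq {p r n a m : ℕ} (hr : r < p) (h : a + p * m = p * n + r) :
    m ≤ n ∧ a = p * (n - m) + r := by
  have hm : m ≤ n := by
    by_contra! hnm
    have : p * (n + 1) ≤ p * m := Nat.mul_le_mul_left p hnm
    linarith [mul_add p n 1]
  exact ⟨hm, by rw [Nat.mul_sub]; have := Nat.mul_le_mul_left p hm; omega⟩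

lemma sect_mul_psub {p r : ℕ} (hr : r < p) (g h : R⟦X⟧) :
    sect p r (g * psub p h) = sect p r g * h := by
  have hp : 0 < p := by omega
  ext n
  simp only [sect, psub, coeff_mk, PowerSeries.coeff_mul, mul_ite, mul_zero, ← Finset.sum_filter]
  symm
  refine Finset.sum_bij (fun x _ => (p * x.1 + r, p * x.2)) ?_ ?_ ?_ ?_
  · rintro ⟨u, v⟩ huv
    rw [Finset.HasAntidiagonal.mem_antidiagonal] at huv
    simp only [Finset.mem_filter, Finset.HasAntidiagonal.mem_antidiagonal, ← huv]
    exact ⟨by ring, dvd_mul_right p v⟩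
  · rintro ⟨u₁, v₁⟩ - ⟨u₂, v₂⟩ - huv
    simp only [Prod.mk.injEq, add_left_inj, mul_right_inj' hp.ne'] at huv ⊢
    exact huv
  · rintro ⟨a, c⟩ hac
    simp only [Finset.mem_filter, Finset.HasAntidiagonal.mem_antidiagonal] at hac
    obtain ⟨hsum, m, rfl⟩ := hac
    obtain ⟨hmn, rfl⟩ := eq_mul_sub_add_of_add_mul_eq hr hsum
    exact ⟨(n - m, m), by simp [Finset.HasAntidiagonal.mem_antidiagonal, hmn], rfl⟩
  · rintro ⟨u, v⟩ -
    simp [Nat.mul_div_cancel_left _ hp]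

end Operators

section SectionOfPolynomial

variable {R : Type*} [CommSemiring R]

-- Agrees with `sect p r A` only for `0 < p`: the cutoff `natDegree + 1` relies on `n ≤ p * n + r`.
noncomputable def sectPoly (p r : ℕ) (A : R[X]) : R[X] :=
  ∑ n ∈ Finset.range (A.natDegree + 1), monomial n (A.coeff (p * n + r))

lemma coeff_sectPoly {p : ℕ} (hp : 0 < p) (r : ℕ) (A : R[X]) (n : ℕ) :
    (sectPoly p r A).coeff n = A.coeff (p * n + r) := by
  simp only [sectPoly, finsetSum_coeff, Polynomial.coeff_monomial, Finset.sum_ite_eq',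
    Finset.mem_range]
  split_ifs with hn
  · rfl
  · refine (coeff_eq_zero_of_natDegree_lt ?_).symm
    nlinarith

lemma coe_sectPoly {p : ℕ} (hp : 0 < p) (r : ℕ) (A : R[X]) :
    (sectPoly p r A : R⟦X⟧) = sect p r A := by
  ext n
  simp [sect, coeff_sectPoly hp]

lemma natDegree_sectPoly_le {p r N : ℕ} {A : R[X]} (hA : A.natDegree < p * (N + 1)) :
    (sectPoly p r A).natDegree ≤ N := by
  have hp : 0 < p := Nat.pos_of_ne_zero (by rintro rfl; simp at hA)
  refine natDegree_le_iff_coeff_eq_zero.mpr fun n hn => ?_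
  rw [coeff_sectPoly hp]
  refine coeff_eq_zero_of_natDegree_lt ?_
  have : p * (N + 1) ≤ p * n := Nat.mul_le_mul_left p (by exact_mod_cast hn)
  omega

lemma sect_add_sum_mul_psub {p r : ℕ} (hr : r < p) (A : R[X]) {ι : Type*} (s : Finset ι)
    (G : ι → R[X]) (z : ι → R⟦X⟧) :
    sect p r ((A : R⟦X⟧) + ∑ i ∈ s, (G i : R⟦X⟧) * psub p (z i)) =
      (sectPoly p r A : R⟦X⟧) + ∑ i ∈ s, (sectPoly p r (G i) : R⟦X⟧) * z i := by
  have hp : 0 < p := by omega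
  simp only [sect_add, sect_sum, sect_mul_psub hr, coe_sectPoly hp]

end SectionOfPolynomial

section MahlerSpace

variable {R : Type*} [CommRing R]

def mahlerSpace (p k D : ℕ) (f : R⟦X⟧) : Set R⟦X⟧ :=
  {z | ∃ (α : R[X]) (β : Fin (k + 1) → R[X]), α.natDegree ≤ D ∧ (∀ i, (β i).natDegree ≤ D) ∧
    z = (α : R⟦X⟧) + ∑ i, (β i : R⟦X⟧) * psub (p ^ (i : ℕ)) f}

lemma add_sum_mem_mahlerSpace {p k D : ℕ} (f : R⟦X⟧) {A : R[X]} {G : Fin k → R[X]}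
    (hA : A.natDegree ≤ D) (hG : ∀ i, (G i).natDegree ≤ D) :
    (A : R⟦X⟧) + ∑ i : Fin k, (G i : R⟦X⟧) * psub (p ^ (i : ℕ)) f ∈ mahlerSpace p k D f := by
  refine ⟨A, Fin.snoc G 0, hA, Fin.lastCases (by simp) (by simpa), ?_⟩
  simp [Fin.sum_univ_castSucc]

lemma add_sum_mul_psub_eq_of_mahler {p k : ℕ} {f : R⟦X⟧} {b : R[X]} {d : Fin k → R[X]}
    (heq : f + ∑ i : Fin k, (d i : R⟦X⟧) * psub (p ^ ((i : ℕ) + 1)) f = b)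
    (α : R[X]) (β : Fin (k + 1) → R[X]) :
    (α : R⟦X⟧) + ∑ i, (β i : R⟦X⟧) * psub (p ^ (i : ℕ)) f =
      ((α + β 0 * b : R[X]) : R⟦X⟧) +
        ∑ i : Fin k, ((β i.succ - β 0 * d i : R[X]) : R⟦X⟧) * psub (p ^ ((i : ℕ) + 1)) f := by
  rw [Fin.sum_univ_succ, Polynomial.coe_add, Polynomial.coe_mul, ← heq]
  simp only [Fin.val_zero, pow_zero, psub_one, Fin.val_succ, Polynomial.coe_sub,
    Polynomial.coe_mul, sub_mul, Finset.sum_sub_distrib, mul_assoc]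
  rw [← Finset.mul_sum]
  ring

theorem sect_mem_mahlerSpace {p k D r : ℕ} (hp : 2 ≤ p) (hr : r < p) {f : R⟦X⟧} {b : R[X]}
    {d : Fin k → R[X]} (hb : b.natDegree ≤ D) (hd : ∀ i, (d i).natDegree ≤ D)
    (heq : f + ∑ i : Fin k, (d i : R⟦X⟧) * psub (p ^ ((i : ℕ) + 1)) f = b)
    {z : R⟦X⟧} (hz : z ∈ mahlerSpace p k D f) : sect p r z ∈ mahlerSpace p k D f := by
  obtain ⟨α, β, hα, hβ, rfl⟩ := hz
  have hlt : ∀ n, n ≤ D + D → n < p * (D + 1) := fun n hn => by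
    have := Nat.mul_le_mul_right (D + 1) hp; omega
  have hA : (α + β 0 * b).natDegree < p * (D + 1) := hlt _ <|
    (natDegree_add_le _ _).trans <| max_le (by omega) <|
      natDegree_mul_le.trans (add_le_add (hβ 0) hb)
  have hG : ∀ i : Fin k, (β i.succ - β 0 * d i).natDegree < p * (D + 1) := fun i => hlt _ <|
    (natDegree_sub_le _ _).trans <| max_le (by have := hβ i.succ; omega) <|
      natDegree_mul_le.trans (add_le_add (hβ 0) (hd i))
  rw [add_sum_mul_psub_eq_of_mahler heq]
  simp only [psub_pow_succ]
  rw [sect_add_sum_mul_psub hr]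
  exact add_sum_mem_mahlerSpace f (natDegree_sectPoly_le hA) fun i => natDegree_sectPoly_le (hG i)

end MahlerSpace

/-- If `f ∈ F_p[[x]]` satisfies the Mahler equation
`f(x) + d_1(x) f(x^p) + ⋯ + d_k(x) f(x^{p^k}) = b(x)` with all coefficient polynomials of
degree at most `D`, then the space
`V = {α + Σ_{i=0}^k β_i f(x^{p^i}) : deg α, deg β_i ≤ D}` is closed under every `S_r`. -/
theorem mahler_space_closed_under_sections (p : ℕ) (hp : p.Prime) (k D : ℕ)
    (f : PowerSeries (ZMod p)) (b : Polynomial (ZMod p)) (dcoef : Fin k → Polynomial (ZMod p))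
    (hb : b.natDegree ≤ D) (hdcoef : ∀ i, (dcoef i).natDegree ≤ D)
    (heq : f + ∑ i : Fin k, (dcoef i : PowerSeries (ZMod p)) * psub (p ^ ((i : ℕ) + 1)) f =
      (b : PowerSeries (ZMod p))) :
    ∀ r < p, ∀ z ∈ {z : PowerSeries (ZMod p) |
        ∃ (α : Polynomial (ZMod p)) (β : Fin (k + 1) → Polynomial (ZMod p)),
          α.natDegree ≤ D ∧ (∀ i, (β i).natDegree ≤ D) ∧
          z = (α : PowerSeries (ZMod p)) +
            ∑ i, (β i : PowerSeries (ZMod p)) * psub (p ^ (i : ℕ)) f},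
      sect p r z ∈ {z : PowerSeries (ZMod p) |
        ∃ (α : Polynomial (ZMod p)) (β : Fin (k + 1) → Polynomial (ZMod p)),
          α.natDegree ≤ D ∧ (∀ i, (β i).natDegree ≤ D) ∧
          z = (α : PowerSeries (ZMod p)) +
            ∑ i, (β i : PowerSeries (ZMod p)) * psub (p ^ (i : ℕ)) f} := by
  exact fun _ hr _ hz => sect_mem_mahlerSpace hp.two_le hr hb hdcoef heq hz
end

section
/- Let p be prime, 0 ≠ E ∈ F_p[x,y], and f, g ∈ F_p[[x]] with f ≠ g and E(x, f(x)) = E(x, g(x)) = 0. Then there exists n ≤ (d+1)(p^d − d + 1)·deg_x E, where d = deg_y E, such that the coefficients of x^n in f and g differ. -/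
open PowerSeries

/-!
Let `d = deg_y E`, `a` the leading coefficient of `E` in `y` and `M = p^d + 1 - d`. Pseudo-dividing
`a^M y^(p^j)` by `E` for `j = 0, …, d` leaves `d + 1` remainders of `y`-degree `< d` and `x`-degree
`≤ M deg_x E`; counting dimensions, a nontrivial `F_p[x]`-combination of them with coefficients of
degree `≤ d M deg_x E` vanishes. Hence `E` divides a nonzero additive polynomial
`Σ b_j y^(p^j)` with `deg b_j ≤ (d + 1) M deg_x E`. Additivity makes `f - g` a root of it as well,
and in `Σ b_j (f - g)^(p^j)` the term with the least `j` such that `b_j ≠ 0` has strictly smaller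
order than all others unless `ord (f - g) ≤ max_j deg b_j`.
-/

namespace Polynomial

section DegX

variable {R : Type*} [CommRing R]

theorem natDegree_coeff_le_degX (A : R[X][X]) (i : ℕ) : (A.coeff i).natDegree ≤ degX A := by
  by_cases h : A.coeff i = 0
  · simp [h]
  · exact Finset.le_sup (f := fun n => (A.coeff n).natDegree) (mem_support_iff.mpr h)

theorem degX_le_iff {A : R[X][X]} {m : ℕ} : degX A ≤ m ↔ ∀ i, (A.coeff i).natDegree ≤ m :=
  ⟨fun h i => (natDegree_coeff_le_degX A i).trans h, fun h => Finset.sup_le fun i _ => h i⟩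

theorem degX_sub_le (A B : R[X][X]) : degX (A - B) ≤ max (degX A) (degX B) :=
  degX_le_iff.mpr fun i => by
    rw [coeff_sub]
    exact (natDegree_sub_le _ _).trans
      (max_le_max (natDegree_coeff_le_degX A i) (natDegree_coeff_le_degX B i))

theorem degX_C_mul_le (c : R[X]) (A : R[X][X]) : degX (C c * A) ≤ c.natDegree + degX A :=
  degX_le_iff.mpr fun i => by
    rw [coeff_C_mul]
    exact natDegree_mul_le.trans (Nat.add_le_add_left (natDegree_coeff_le_degX A i) _)

theorem degX_X_pow_mul_le (k : ℕ) (A : R[X][X]) : degX (X ^ k * A) ≤ degX A :=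
  degX_le_iff.mpr fun i => by
    rw [coeff_X_pow_mul']
    split_ifs
    · exact natDegree_coeff_le_degX A _
    · simp

theorem degX_X_pow (k : ℕ) : degX (X ^ k : R[X][X]) = 0 :=
  Nat.le_zero.mp <| degX_le_iff.mpr fun i => by
    rw [coeff_X_pow]
    split_ifs <;> simp

theorem degX_sum_le {ι : Type*} (s : Finset ι) (A : ι → R[X][X]) {m : ℕ}
    (h : ∀ j ∈ s, degX (A j) ≤ m) : degX (∑ j ∈ s, A j) ≤ m :=
  degX_le_iff.mpr fun i => by
    rw [finsetSum_coeff]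
    exact natDegree_sum_le_of_forall_le _ _ fun j hj => (natDegree_coeff_le_degX _ i).trans (h j hj)

theorem eq_zero_of_coeff_coeff_eq_zero {A : R[X][X]} {d e : ℕ} (hd : A.natDegree < d)
    (he : degX A < e) (h : ∀ i < d, ∀ m < e, (A.coeff i).coeff m = 0) : A = 0 := by
  ext i m
  rw [coeff_zero, coeff_zero]
  by_cases hi : i < d
  · by_cases hm : m < e
    · exact h i hi m hm
    · exact coeff_eq_zero_of_natDegree_lt ((natDegree_coeff_le_degX A i).trans_lt (by omega))
  · rw [coeff_eq_zero_of_natDegree_lt (by omega : A.natDegree < i), coeff_zero]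

end DegX

section PseudoDivision

variable {R : Type*} [CommRing R]

theorem exists_C_leadingCoeff_pow_mul_eq_mul_add {E : R[X][X]} (hE : 0 < E.natDegree) (n : ℕ)
    {P : R[X][X]} (hP : P.natDegree ≤ n) :
    ∃ q r : R[X][X], C E.leadingCoeff ^ (n + 1 - E.natDegree) * P = q * E + r ∧
      r.natDegree < E.natDegree ∧ degX r ≤ degX P + (n + 1 - E.natDegree) * degX E := by
  set d := E.natDegree
  set a := E.leadingCoeff
  induction n generalizing P with
  | zero => exact ⟨0, P, by simp [show 0 + 1 - d = 0 by omega], by omega, by simp⟩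
  | succ n ih =>
    by_cases hn : n + 1 < d
    · exact ⟨0, P, by simp [show n + 1 + 1 - d = 0 by omega], by omega, by simp⟩
    set c := P.coeff (n + 1)
    -- cancel the `y^(n+1)` term of `a P` against `c y^(n+1-d) E`
    set P' := C a * P - C c * (X ^ (n + 1 - d) * E)
    have hP' : P'.natDegree ≤ n := by
      refine natDegree_le_iff_coeff_eq_zero.mpr fun m hm => ?_
      simp only [P', coeff_sub, coeff_C_mul, coeff_X_pow_mul']
      rcases (Nat.succ_le_of_lt hm).eq_or_lt with rfl | hm
      · rw [if_pos (by omega), show n + 1 - (n + 1 - d) = d by omega, coeff_natDegree]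
        ring
      · rw [coeff_eq_zero_of_natDegree_lt (hP.trans_lt hm)]
        split_ifs
        · rw [coeff_eq_zero_of_natDegree_lt (by omega)]
          ring
        · ring
    have hdegX : degX P' ≤ degX P + degX E := by
      have ha : a.natDegree ≤ degX E := natDegree_coeff_le_degX E d
      have hc : c.natDegree ≤ degX P := natDegree_coeff_le_degX P _
      refine (degX_sub_le _ _).trans (max_le ?_ ?_)
      · exact (degX_C_mul_le a P).trans (by omega)
      · exact (degX_C_mul_le c _).trans (by have := degX_X_pow_mul_le (n + 1 - d) E; omega)
    obtain ⟨q, r, hqr, hrd, hrX⟩ := ih hP'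
    have hexp : n + 1 + 1 - d = (n + 1 - d) + 1 := by omega
    refine ⟨C a ^ (n + 1 - d) * (C c * X ^ (n + 1 - d)) + q, r, ?_, hrd, ?_⟩
    · rw [hexp, pow_succ, mul_assoc, show C a * P = P' + C c * (X ^ (n + 1 - d) * E) by ring,
        mul_add, hqr]
      ring
    · rw [hexp]
      linarith

end PseudoDivision

section LinearAlgebra

variable {K : Type*} [Field K]

theorem exists_ne_zero_sum_C_mul_eq_zero {ι : Type*} [Fintype ι] {d B : ℕ}
    (hι : d < Fintype.card ι) (r : ι → K[X][X]) (hr : ∀ j, (r j).natDegree < d)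
    (hB : ∀ j, degX (r j) ≤ B) :
    ∃ c : ι → K[X], c ≠ 0 ∧ (∀ j, (c j).natDegree ≤ d * B) ∧ ∑ j, C (c j) * r j = 0 := by
  set D := d * B
  let L : (ι → degreeLT K (D + 1)) →ₗ[K] Fin d → Fin (D + B + 1) → K :=
    { toFun := fun w i m => ((∑ j, C (w j : K[X]) * r j).coeff i).coeff m
      map_add' := fun v w => by
        funext i m
        simp [add_mul, Finset.sum_add_distrib]
      map_smul' := fun c w => by
        funext i m
        simp [Finset.mul_sum] }
  have hrank : Module.finrank K (Fin d → Fin (D + B + 1) → K) <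
      Module.finrank K (ι → degreeLT K (D + 1)) := by
    simp only [Module.finrank_pi_fintype, (degreeLTEquiv K (D + 1)).finrank_eq,
      Module.finrank_self, Fintype.card_fin, Finset.sum_const, Finset.card_univ, smul_eq_mul,
      mul_one]
    calc d * (D + B + 1) < (d + 1) * (D + 1) := by simp only [D]; ring_nf; omega
      _ ≤ Fintype.card ι * (D + 1) := Nat.mul_le_mul_right _ hι
  obtain ⟨w, hw, hw0⟩ :=
    Submodule.exists_mem_ne_zero_of_ne_bot (LinearMap.ker_ne_bot_of_finrank_lt hrank)
  have hdeg : ∀ j, (w j : K[X]).natDegree ≤ D := fun j =>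
    natDegree_le_iff_coeff_eq_zero.mpr fun m hm =>
      (degree_lt_iff_coeff_zero _ _).mp (mem_degreeLT.mp (w j).2) m hm
  have hne : (fun j => (w j : K[X])) ≠ 0 := by
    contrapose! hw0
    ext j : 1
    exact Subtype.ext (congrFun hw0 j)
  refine ⟨fun j => w j, hne, hdeg, ?_⟩
  beta_reduce
  refine eq_zero_of_coeff_coeff_eq_zero (d := d) (e := D + B + 1) ?_ ?_
    fun i hi m hm => congrFun (congrFun ((LinearMap.mem_ker (f := L)).mp hw) ⟨i, hi⟩) ⟨m, hm⟩
  · obtain ⟨j₀⟩ : Nonempty ι := Fintype.card_pos_iff.mp (by omega)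
    have := hr j₀
    have : (∑ j, C (w j : K[X]) * r j).natDegree ≤ d - 1 :=
      natDegree_sum_le_of_forall_le _ _ fun j _ =>
        (natDegree_C_mul_le _ _).trans (Nat.le_sub_one_of_lt (hr j))
    omega
  · have : degX (∑ j, C (w j : K[X]) * r j) ≤ D + B :=
      degX_sum_le _ _ fun j _ => (degX_C_mul_le _ _).trans (Nat.add_le_add (hdeg j) (hB j))
    omega

theorem exists_dvd_sum_C_mul_X_pow {E : K[X][X]} (hE : 0 < E.natDegree) {ι : Type*} [Fintype ι]
    (hι : E.natDegree < Fintype.card ι) {e : ι → ℕ} {n : ℕ} (hen : ∀ j, e j ≤ n) :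
    ∃ b : ι → K[X], b ≠ 0 ∧
      (∀ j, (b j).natDegree ≤ (E.natDegree + 1) * (n + 1 - E.natDegree) * degX E) ∧
      E ∣ ∑ j, C (b j) * X ^ e j := by
  have hred := fun j => exists_C_leadingCoeff_pow_mul_eq_mul_add hE n
    ((natDegree_X_pow (R := K[X]) (e j)).trans_le (hen j))
  choose q r hqr hrd hrX using hred
  simp only [degX_X_pow, zero_add] at hrX
  set d := E.natDegree
  set M := n + 1 - d
  have ha : E.leadingCoeff ≠ 0 := leadingCoeff_ne_zero.mpr (ne_zero_of_natDegree_gt hE)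
  obtain ⟨c, hc, hcdeg, hcr⟩ := exists_ne_zero_sum_C_mul_eq_zero hι r hrd hrX
  refine ⟨fun j => c j * E.leadingCoeff ^ M, ?_, fun j => ?_, ⟨∑ j, C (c j) * q j, ?_⟩⟩
  · obtain ⟨j, hj⟩ := Function.ne_iff.mp hc
    exact Function.ne_iff.mpr ⟨j, mul_ne_zero hj (pow_ne_zero _ ha)⟩
  · have hpow : (E.leadingCoeff ^ M).natDegree ≤ M * degX E :=
      natDegree_pow_le.trans (Nat.mul_le_mul_left _ (natDegree_coeff_le_degX E d))
    calc (c j * E.leadingCoeff ^ M).natDegree ≤ d * (M * degX E) + M * degX E :=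
          natDegree_mul_le.trans (Nat.add_le_add (hcdeg j) hpow)
      _ = (d + 1) * M * degX E := by ring
  · calc ∑ j, C (c j * E.leadingCoeff ^ M) * X ^ e j
        = ∑ j, C (c j) * (C E.leadingCoeff ^ M * X ^ e j) := by
          simp only [map_mul, map_pow, mul_assoc]
      _ = ∑ j, (E * (C (c j) * q j) + C (c j) * r j) :=
          Finset.sum_congr rfl fun j _ => by rw [hqr]; ring
      _ = E * ∑ j, C (c j) * q j + ∑ j, C (c j) * r j := by
          rw [Finset.sum_add_distrib, Finset.mul_sum]
      _ = E * ∑ j, C (c j) * q j := by rw [hcr, add_zero]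

end LinearAlgebra

theorem order_coe_le_natDegree {R : Type*} [Semiring R] {b : R[X]} (hb : b ≠ 0) :
    (b : R⟦X⟧).order ≤ b.natDegree :=
  order_le _ (by rwa [coeff_coe, coeff_natDegree, ne_eq, leadingCoeff_eq_zero])

end Polynomial

namespace PowerSeries

theorem order_le_of_sum_mul_pow_eq_zero {R : Type*} [CommRing R] [IsDomain R] {ι : Type*}
    [Fintype ι] {b : ι → R⟦X⟧} {e : ι → ℕ} (he : Function.Injective e) (hb : b ≠ 0) {N : ℕ}
    (hbN : ∀ j, b j ≠ 0 → (b j).order ≤ N)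
    {z : R⟦X⟧} (hz : z ≠ 0) (hsum : ∑ j, b j * z ^ e j = 0) : z.order ≤ N := by
  classical
  by_contra! hzN
  obtain ⟨v, hv⟩ := ENat.ne_top_iff_exists.mp (order_finite_iff_ne_zero.mpr hz).ne
  obtain ⟨J, hJ, hJmin⟩ := Finset.exists_min_image (Finset.univ.filter (b · ≠ 0)) e <| by
    obtain ⟨j, hj⟩ := Function.ne_iff.mp hb
    exact ⟨j, by simpa using hj⟩
  have hbJ : b J ≠ 0 := (Finset.mem_filter.mp hJ).2
  obtain ⟨u, hu⟩ := ENat.ne_top_iff_exists.mp (order_finite_iff_ne_zero.mpr hbJ).ne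
  have huv : u < v := by
    have := hbN J hbJ
    rw [← hu] at this
    rw [← hv] at hzN
    exact_mod_cast this.trans_lt hzN
  have hJord : (b J * z ^ e J).order = (u + e J * v : ℕ) := by
    rw [order_mul, order_pow, ← hu, ← hv]
    push_cast
    ring
  have hother : ∀ j ≠ J, ((u + e J * v : ℕ) : ℕ∞) < (b j * z ^ e j).order := by
    intro j hj
    by_cases hbj : b j = 0
    · rw [hbj, zero_mul, order_zero]
      exact ENat.natCast_lt_top _
    have hlt : e J < e j := (hJmin j (by simpa using hbj)).lt_of_ne (he.ne hj).symm
    calc ((u + e J * v : ℕ) : ℕ∞) < (e j * v : ℕ) := by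
          norm_cast
          nlinarith
      _ ≤ (b j).order + e j • z.order := by
          rw [← hv]
          push_cast
          exact le_add_self
      _ = (b j * z ^ e j).order := by rw [order_mul, order_pow]
  have hcoeff := congrArg (coeff (u + e J * v)) hsum
  rw [map_sum, Finset.sum_eq_single J (fun j _ hj => coeff_of_lt_order _ (hother j hj))
    (by simp), map_zero] at hcoeff
  exact (order_eq_nat.mp hJord).1 hcoeff

theorem exists_coeff_ne_of_order_sub_le {R : Type*} [Ring R] {f g : R⟦X⟧} (hfg : f ≠ g)
    {N : ℕ} (h : (f - g).order ≤ N) : ∃ n ≤ N, coeff n f ≠ coeff n g :=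
  ⟨(f - g).order.toNat, ENat.toNat_le_of_le_natCast h,
    fun he => coeff_order (sub_ne_zero.mpr hfg) (by rw [map_sub, he, sub_self])⟩

end PowerSeries

/-- Corollary G: if `E ∈ F_p[x,y]` is nonzero and `f ≠ g` are power series roots of
`E(x,y) = 0`, then `f` and `g` differ in some coefficient of index
`n ≤ (d+1)(p^d − d + 1)·deg_x E`, where `d = deg_y E`. -/
theorem roots_differ_early (p : ℕ) (hp : p.Prime)
    (E : Polynomial (Polynomial (ZMod p))) (hE : E ≠ 0)
    (f g : PowerSeries (ZMod p)) (hfg : f ≠ g)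
    (hf : Polynomial.eval₂ ((Polynomial.coeToPowerSeries.ringHom : Polynomial (ZMod p) →+* PowerSeries (ZMod p))) f E = 0)
    (hg : Polynomial.eval₂ ((Polynomial.coeToPowerSeries.ringHom : Polynomial (ZMod p) →+* PowerSeries (ZMod p))) g E = 0) :
    ∃ n ≤ (E.natDegree + 1) * (p ^ E.natDegree - E.natDegree + 1) * degX E,
      PowerSeries.coeff (R := ZMod p) n f ≠ PowerSeries.coeff (R := ZMod p) n g := by
  have : Fact p.Prime := ⟨hp⟩
  have : CharP (ZMod p)⟦X⟧ p := charP_of_injective_ringHom PowerSeries.C_injective p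
  set φ : Polynomial (ZMod p) →+* (ZMod p)⟦X⟧ := Polynomial.coeToPowerSeries.ringHom
  set d := E.natDegree
  have hd : 0 < d := Polynomial.natDegree_pos_of_eval₂_root hE φ hf fun c hc =>
    (Polynomial.coe_eq_zero_iff (R := ZMod p)).mp hc
  obtain ⟨b, hb, hbdeg, hdvd⟩ := Polynomial.exists_dvd_sum_C_mul_X_pow hd (ι := Fin (d + 1))
    (by simp [d]) (e := fun j => p ^ (j : ℕ)) (n := p ^ d)
    fun j => Nat.pow_le_pow_right hp.pos j.is_le
  have hroot : ∀ z, Polynomial.eval₂ φ z E = 0 →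
      ∑ j : Fin (d + 1), φ (b j) * z ^ p ^ (j : ℕ) = 0 := fun z hz => by
    simpa [Polynomial.eval₂_finsetSum] using
      Polynomial.eval₂_eq_zero_of_dvd_of_eval₂_eq_zero _ _ hdvd hz
  have hsum : ∑ j : Fin (d + 1), φ (b j) * (f - g) ^ p ^ (j : ℕ) = 0 := by
    simp only [sub_pow_char_pow, mul_sub, Finset.sum_sub_distrib, hroot f hf, hroot g hg, sub_zero]
  refine exists_coeff_ne_of_order_sub_le hfg (order_le_of_sum_mul_pow_eq_zero
    ((Nat.pow_right_injective hp.two_le).comp Fin.val_injective) ?_ (fun j hj => ?_)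
    (sub_ne_zero.mpr hfg) hsum)
  · exact fun h => hb (funext fun j => Polynomial.coe_eq_zero_iff.mp (congrFun h j))
  · have hbj : b j ≠ 0 := fun h => hj (by simp [φ, h])
    rw [← Nat.sub_add_comm (Nat.lt_pow_self hp.one_lt).le]
    exact (Polynomial.order_coe_le_natDegree hbj).trans (by exact_mod_cast hbdeg j)
end

section
/- For the Catalan numbers c_n = (1/n)·C(2n−2, n−1) (n ≥ 1), the congruence c_n ≡ c_{n/2} (mod 2) holds for all n > 1, where c_{n/2} is interpreted as 0 when n is odd. -/
open Finset in
lemma sum_mul_rev_zmod2 (f : ℕ → ZMod 2) (n : ℕ) :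
    ∑ i ∈ range (n + 1), f i * f (n - i) =
      if 2 ∣ n then f (n / 2) else 0 := by
  rcases Nat.even_or_odd n with ⟨k, hk⟩ | ⟨k, hk⟩
  · subst hk
    have hdvd : 2 ∣ k + k := ⟨k, by ring⟩
    have hmem : k ∈ range (k + k + 1) := by simp
    rw [if_pos hdvd, ← Finset.add_sum_erase _ _ hmem]
    have h0 : ∑ i ∈ (range (k + k + 1)).erase k, f i * f (k + k - i) = 0 := by
      apply Finset.sum_involution (fun i _ => k + k - i)
      · intro i hi
        simp only [mem_erase, mem_range] at hi
        have : k + k - (k + k - i) = i := by omega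
        rw [this, mul_comm]
        exact CharTwo.add_self_eq_zero _
      · intro i hi _
        simp only [mem_erase, mem_range] at hi
        omega
      · intro i hi
        simp only [mem_erase, mem_range] at hi ⊢
        omega
      · intro i hi
        simp only [mem_erase, mem_range] at hi
        omega
    rw [h0, add_zero]
    have hsq : ∀ x : ZMod 2, x * x = x := by decide
    have h1 : (k + k) / 2 = k := by omega
    have h2 : k + k - k = k := by omega
    rw [h1, h2, hsq]
  · subst hk
    rw [if_neg (by omega)]
    apply Finset.sum_involution (fun i _ => 2 * k + 1 - i)
    · intro i hi
      simp only [mem_range] at hi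
      have : 2 * k + 1 - (2 * k + 1 - i) = i := by omega
      rw [this, mul_comm]
      exact CharTwo.add_self_eq_zero _
    · intro i hi _
      simp only [mem_range] at hi
      omega
    · intro i hi
      simp only [mem_range] at hi ⊢
      omega
    · intro i hi
      simp only [mem_range] at hi
      omega

/-- For the Catalan numbers `c_n = (1/n)·C(2n−2,n−1) = catalan (n-1)` (indexed from `n = 1`),
one has `c_n ≡ c_{n/2} (mod 2)` for all `n > 1`, where `c_{n/2}` is interpreted as `0`
when `n` is odd. -/
theorem catalan_mod_two_recurrence (n : ℕ) (hn : 1 < n) :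
    catalan (n - 1) % 2 = (if 2 ∣ n then catalan (n / 2 - 1) else 0) % 2 := by
  obtain ⟨m, rfl⟩ : ∃ m, n = m + 2 := ⟨n - 2, by omega⟩
  have key : ((catalan (m + 1) : ZMod 2)) =
      ((if 2 ∣ m + 2 then catalan ((m + 2) / 2 - 1) else 0 : ℕ) : ZMod 2) := by
    rw [catalan_succ, Fin.sum_univ_eq_sum_range (fun i => catalan i * catalan (m - i))]
    push_cast
    rw [sum_mul_rev_zmod2 (fun i => (catalan i : ZMod 2)) m]
    have h2 : 2 ∣ m + 2 ↔ 2 ∣ m := by omega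
    by_cases hm : 2 ∣ m
    · rw [if_pos hm, if_pos (h2.mpr hm)]
      have : (m + 2) / 2 - 1 = m / 2 := by omega
      rw [this]
    · rw [if_neg hm, if_neg (fun h => hm (h2.mp h))]
      try simp
  have := (ZMod.natCast_eq_natCast_iff _ _ _).mp key
  simpa [Nat.ModEq, Nat.add_sub_cancel] using this
end

section
/- Let p be a prime and f ∈ F_p[[x]] a power series algebraic over F_p(x) (i.e., E(x, f(x)) = 0 for some nonzero E ∈ F_p[x,y]). Then the F_p-vector space spanned by the orbit of f under all finite compositions of the section operators S_0, ..., S_{p−1} is finite-dimensional. -/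
/-!
An algebraic `f` gives, by linear algebra over `F_p(x)`, a relation `∑_{i ≤ T} A_i f^{p^i} = 0`
with polynomial coefficients. Over `F_p` Frobenius is the substitution `x ↦ x^p`, so
`S_r(g^p h) = g S_r(h)`: applying a section to a relation lowers every Frobenius index by one,
and we may assume `A_0 ≠ 0`. Let `V` be the space of `∑_{i ≤ T} P_i f^{p^i}` with
`deg P_i ≤ D := max deg A_i`. Then `W = {z | A_0 z ∈ V}` is finite-dimensional, contains `f`, and
is stable under every `S_r`: `A_0 S_r(z) = S_r(A_0^{p-1} · A_0 z)`, the relation turns the `i = 0`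
terms of `A_0^{p-1} V` into terms with `i ≥ 1`, and then `S_r` divides all degrees by `p`.
-/

open PowerSeries

open scoped Polynomial LaurentSeries RatFunc

section Semiring

variable {R : Type*} [Semiring R] {p : ℕ}

@[simp]
theorem coeff_sect (r n : ℕ) (z : R⟦X⟧) :
    coeff n (sect p r z) = coeff (p * n + r) z := by
  simp [sect]

variable (p) in
noncomputable def sectLinearMap (r : ℕ) : R⟦X⟧ →ₗ[R] R⟦X⟧ where
  toFun := sect p r
  map_add' _ _ := by ext; simp
  map_smul' _ _ := by ext; simp

@[simp]
theorem sectLinearMap_apply (r : ℕ) (z : R⟦X⟧) : sectLinearMap p r z = sect p r z := rfl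

theorem foldl_sect_mem {W : Set R⟦X⟧}
    (hW : ∀ r < p, ∀ z ∈ W, sect p r z ∈ W) {L : List ℕ} (hL : ∀ r ∈ L, r < p) {z : R⟦X⟧}
    (hz : z ∈ W) : L.foldl (fun z r => sect p r z) z ∈ W := by
  induction L generalizing z with
  | nil => exact hz
  | cons r L ih =>
    exact ih (fun s hs => hL s (List.mem_cons_of_mem r hs)) (hW r (hL r List.mem_cons_self) z hz)

theorem exists_coe_eq_sect (hp : p ≠ 0) (r : ℕ) (P : R[X]) :
    ∃ Q : R[X], Q.natDegree ≤ P.natDegree / p ∧ (Q : R⟦X⟧) = sect p r P := by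
  refine ⟨trunc (P.natDegree / p + 1) (sect p r P),
    Nat.lt_succ_iff.1 (natDegree_trunc_lt _ _), ?_⟩
  ext n
  rw [Polynomial.coeff_coe, coeff_trunc]
  split_ifs with hn
  · rfl
  · rw [coeff_sect, Polynomial.coeff_coe, Polynomial.coeff_eq_zero_of_natDegree_lt]
    have := Nat.lt_mul_div_succ P.natDegree (Nat.pos_of_ne_zero hp)
    have := Nat.mul_le_mul_left p (not_lt.1 hn)
    omega

end Semiring

section CommRing

variable {R : Type*} [CommRing R] {p : ℕ}

theorem PowerSeries.coeff_X_pow_mul_expand (hp : p ≠ 0) {j r : ℕ} (hj : j < p) (hr : r < p)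
    (n : ℕ) (h : R⟦X⟧) :
    coeff (p * n + r) (X ^ j * expand p hp h) = if j = r then coeff n h else 0 := by
  rw [coeff_X_pow_mul', coeff_expand]
  split_ifs with hle hdvd hjr hjr
  · subst hjr
    rw [Nat.add_sub_cancel, Nat.mul_div_cancel_left _ (Nat.pos_of_ne_zero hp)]
  · obtain ⟨k, hk⟩ := hdvd
    have hmod := congrArg (· % p) (show p * n + r = p * k + j by omega)
    simp only [Nat.mul_add_mod, Nat.mod_eq_of_lt hr, Nat.mod_eq_of_lt hj] at hmod
    exact absurd hmod.symm hjr
  · exact absurd (hjr ▸ ⟨n, by omega⟩) hdvd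
  · rfl
  · omega
  · rfl

theorem sum_X_pow_mul_expand_sect (hp : p ≠ 0) (z : R⟦X⟧) :
    ∑ j ∈ Finset.range p, X ^ j * expand p hp (sect p j z) = z := by
  ext m
  rw [← Nat.div_add_mod m p, map_sum, Finset.sum_congr rfl fun j hj =>
    coeff_X_pow_mul_expand hp (Finset.mem_range.1 hj) (Nat.mod_lt m (Nat.pos_of_ne_zero hp)) _ _,
    Finset.sum_ite_eq' , if_pos (Finset.mem_range.2 (Nat.mod_lt m (Nat.pos_of_ne_zero hp))),
    coeff_sect]

theorem sect_sum_X_pow_mul_expand (hp : p ≠ 0) {r : ℕ} (hr : r < p) (h : ℕ → R⟦X⟧) :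
    sect p r (∑ j ∈ Finset.range p, X ^ j * expand p hp (h j)) = h r := by
  ext n
  rw [coeff_sect, map_sum, Finset.sum_congr rfl fun j hj =>
    coeff_X_pow_mul_expand hp (Finset.mem_range.1 hj) hr _ _,
    Finset.sum_ite_eq', if_pos (Finset.mem_range.2 hr)]

theorem sect_mul_expand (hp : p ≠ 0) {r : ℕ} (hr : r < p) (z g : R⟦X⟧) :
    sect p r (z * expand p hp g) = sect p r z * g := by
  conv_lhs => rw [← sum_X_pow_mul_expand_sect hp z]
  simp_rw [Finset.sum_mul, mul_assoc, ← map_mul]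
  exact sect_sum_X_pow_mul_expand hp hr _

theorem exists_sect_ne_zero (hp : p ≠ 0) {z : R⟦X⟧} (hz : z ≠ 0) : ∃ r < p, sect p r z ≠ 0 := by
  by_contra! h
  refine hz ((sum_X_pow_mul_expand_sect hp z).symm.trans (Finset.sum_eq_zero fun j hj => ?_))
  rw [h j (Finset.mem_range.1 hj), map_zero, mul_zero]

end CommRing

section Frobenius

variable {p : ℕ} [hp : Fact p.Prime]

theorem pow_prime_eq_expand (z : (ZMod p)⟦X⟧) : z ^ p = expand p hp.out.ne_zero z := by
  have h := MvPowerSeries.map_frobenius_expand p hp.out.ne_zero (f := z)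
  rw [ZMod.frobenius_zmod, MvPowerSeries.map_id] at h
  exact h.symm

theorem sect_mul_pow_prime {r : ℕ} (hr : r < p) (z g : (ZMod p)⟦X⟧) :
    sect p r (z * g ^ p) = sect p r z * g := by
  rw [pow_prime_eq_expand, sect_mul_expand _ hr]

end Frobenius

section PolySpan

variable {R : Type*} [CommRing R] {ι : Type*}

/-- The power series `∑ i, P i * φ i` with `(P i).natDegree ≤ D`. -/
noncomputable def polySpan (D : ℕ) (φ : ι → R⟦X⟧) : Submodule R R⟦X⟧ :=
  ⨆ i, (Polynomial.degreeLT R (D + 1)).map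
    (LinearMap.mulRight R (φ i) ∘ₗ (Polynomial.coeToPowerSeries.algHom R).toLinearMap)

instance [Finite ι] (D : ℕ) (φ : ι → R⟦X⟧) : Module.Finite R (polySpan D φ) := by
  unfold polySpan; infer_instance

theorem Polynomial.mem_degreeLT_succ {P : R[X]} {D : ℕ} :
    P ∈ degreeLT R (D + 1) ↔ P.natDegree ≤ D := by
  rw [mem_degreeLT, degree_lt_iff_coeff_zero, natDegree_le_iff_coeff_eq_zero]
  rfl

theorem coe_mul_mem_polySpan {D : ℕ} {φ : ι → R⟦X⟧} {P : R[X]} (hP : P.natDegree ≤ D) (i : ι) :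
    (P : R⟦X⟧) * φ i ∈ polySpan D φ :=
  Submodule.mem_iSup_of_mem i ⟨P, Polynomial.mem_degreeLT_succ.2 hP, rfl⟩

theorem polySpan_le_iff {D : ℕ} {φ : ι → R⟦X⟧} {V : Submodule R R⟦X⟧} :
    polySpan D φ ≤ V ↔ ∀ i, ∀ P : R[X], P.natDegree ≤ D → (P : R⟦X⟧) * φ i ∈ V := by
  simp only [polySpan, iSup_le_iff, Submodule.map_le_iff_le_comap]
  refine forall_congr' fun i => ⟨fun h P hP => h (Polynomial.mem_degreeLT_succ.2 hP),
    fun h P hP => h P (Polynomial.mem_degreeLT_succ.1 hP)⟩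

theorem sect_mem_polySpan {p : ℕ} (hp : p ≠ 0) {r : ℕ} (hr : r < p) {D : ℕ} {φ : ι → R⟦X⟧}
    {z : R⟦X⟧} (hz : z ∈ polySpan (p * D) (fun i => expand p hp (φ i))) :
    sect p r z ∈ polySpan D φ := by
  suffices polySpan (p * D) (fun i => expand p hp (φ i)) ≤
      (polySpan D φ).comap (sectLinearMap p r) from this hz
  refine polySpan_le_iff.2 fun i P hP => ?_
  obtain ⟨Q, hQ, hQP⟩ := exists_coe_eq_sect hp r P
  rw [Submodule.mem_comap, sectLinearMap_apply, sect_mul_expand hp hr, ← hQP]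
  exact coe_mul_mem_polySpan (hQ.trans (Nat.div_le_of_le_mul hP)) i

end PolySpan

section Relation

variable {R : Type*} [CommRing R]

theorem mul_mem_polySpan_of_sum_eq_zero {T D : ℕ} {φ : Fin (T + 1) → R⟦X⟧}
    {A : Fin (T + 1) → R[X]} (hA : ∀ i, (A i).natDegree ≤ D)
    (hrel : ∑ i, (A i : R⟦X⟧) * φ i = 0) :
    (A 0 : R⟦X⟧) * φ 0 ∈ polySpan D φ := by
  rw [eq_neg_of_add_eq_zero_left ((Fin.sum_univ_succ _).symm.trans hrel)]
  exact neg_mem (sum_mem fun j _ => coe_mul_mem_polySpan (hA _) _)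

theorem pow_pred_mul_mem_polySpan {p T D : ℕ} (hp : 2 ≤ p) {φ : Fin (T + 1) → R⟦X⟧}
    (hφ : ∀ j : Fin T, φ j.succ = φ j.castSucc ^ p) {A : Fin (T + 1) → R[X]}
    (hA : ∀ i, (A i).natDegree ≤ D) (hrel : ∑ i, (A i : R⟦X⟧) * φ i = 0) {v : R⟦X⟧}
    (hv : v ∈ polySpan D φ) :
    (A 0 : R⟦X⟧) ^ (p - 1) * v ∈ polySpan (p * D) (fun i => φ i ^ p) := by
  obtain ⟨q, rfl⟩ : ∃ q, p = q + 2 := ⟨p - 2, by omega⟩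
  suffices polySpan D φ ≤ (polySpan ((q + 2) * D) (fun i => φ i ^ (q + 2))).comap
      (LinearMap.mulLeft R ((A 0 : R⟦X⟧) ^ (q + 2 - 1))) from this hv
  refine polySpan_le_iff.2 fun i P hP => ?_
  rw [Submodule.mem_comap, LinearMap.mulLeft_apply, show q + 2 - 1 = q + 1 by omega]
  induction i using Fin.cases with
  | zero =>
    have hA0 : (A 0 : R⟦X⟧) * φ 0 = -∑ j : Fin T, (A j.succ : R⟦X⟧) * φ j.succ :=
      eq_neg_of_add_eq_zero_left ((Fin.sum_univ_succ _).symm.trans hrel)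
    have hdeg : ∀ j : Fin T, (A 0 ^ q * P * A j.succ).natDegree ≤ (q + 2) * D := fun j =>
      (Polynomial.natDegree_mul_le_of_le (Polynomial.natDegree_mul_le_of_le
        (Polynomial.natDegree_pow_le_of_le q (hA 0)) hP) (hA j.succ)).trans_eq (by ring)
    have hexp : (A 0 : R⟦X⟧) ^ (q + 1) * (P * φ 0) =
        -∑ j : Fin T, ((A 0 ^ q * P * A j.succ : R[X]) : R⟦X⟧) * φ j.castSucc ^ (q + 2) := by
      rw [show (A 0 : R⟦X⟧) ^ (q + 1) * (P * φ 0) = A 0 ^ q * P * (A 0 * φ 0) by ring, hA0,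
        mul_neg, Finset.mul_sum]
      refine congrArg Neg.neg (Finset.sum_congr rfl fun j _ => ?_)
      rw [← hφ]
      push_cast
      ring
    rw [hexp]
    exact neg_mem (sum_mem fun j _ => coe_mul_mem_polySpan (hdeg j) j.castSucc)
  | succ j =>
    have hdeg : (A 0 ^ (q + 1) * P).natDegree ≤ (q + 2) * D :=
      (Polynomial.natDegree_mul_le_of_le (Polynomial.natDegree_pow_le_of_le _ (hA 0)) hP).trans_eq
        (by ring)
    rw [hφ, ← mul_assoc, ← Polynomial.coe_pow, ← Polynomial.coe_mul]
    exact coe_mul_mem_polySpan hdeg j.castSucc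

end Relation

section Algebraic

variable {F : Type*} [Field F]

theorem ofPowerSeries_coe_polynomial (P : F[X]) :
    HahnSeries.ofPowerSeries ℤ F (P : F⟦X⟧) = algebraMap F[X] F⸨X⸩ P := by
  rw [IsScalarTower.algebraMap_apply F[X] F⟮X⟯ F⸨X⸩]
  exact RatFunc.coe_coe P

theorem isIntegral_ofPowerSeries {f : F⟦X⟧} {E : F[X][X]} (hE : E ≠ 0)
    (hEf : E.eval₂ Polynomial.coeToPowerSeries.ringHom f = 0) :
    IsIntegral F⟮X⟯ (HahnSeries.ofPowerSeries ℤ F f) := by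
  refine IsAlgebraic.isIntegral ⟨E.map (algebraMap F[X] F⟮X⟯),
    (Polynomial.map_ne_zero_iff (IsFractionRing.injective _ _)).2 hE, ?_⟩
  have hcomp : (HahnSeries.ofPowerSeries ℤ F).comp Polynomial.coeToPowerSeries.ringHom =
      (algebraMap F⟮X⟯ F⸨X⸩).comp (algebraMap F[X] F⟮X⟯) :=
    RingHom.ext fun P =>
      (ofPowerSeries_coe_polynomial P).trans (IsScalarTower.algebraMap_apply F[X] F⟮X⟯ F⸨X⸩ P)
  rw [Polynomial.aeval_def, Polynomial.eval₂_map, ← hcomp, ← Polynomial.hom_eval₂, hEf, map_zero]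

theorem exists_polynomial_relation {f : F⟦X⟧}
    (halg : ∃ E : F[X][X], E ≠ 0 ∧ E.eval₂ Polynomial.coeToPowerSeries.ringHom f = 0)
    (e : ℕ → ℕ) :
    ∃ (T : ℕ) (B : Fin (T + 1) → F[X]), B ≠ 0 ∧ ∑ i, (B i : F⟦X⟧) * f ^ e i = 0 := by
  obtain ⟨E, hE, hEf⟩ := halg
  -- `F⸨X⸩` is a field containing both `F⟮X⟯` and `F⟦X⟧`.
  set g := HahnSeries.ofPowerSeries ℤ F f
  have := Algebra.finite_adjoin_simple_of_isIntegral (isIntegral_ofPowerSeries hE hEf)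
  set n := Module.finrank F⟮X⟯ (Algebra.adjoin F⟮X⟯ {g})
  let v : Fin (n + 1) → Algebra.adjoin F⟮X⟯ {g} := fun i =>
    ⟨g ^ e i, pow_mem (Algebra.self_mem_adjoin_singleton _ _) _⟩
  have hv : ¬LinearIndependent F⟮X⟯ v := fun h => by
    simpa [n] using h.fintype_card_le_finrank
  obtain ⟨c, hc, i, hci⟩ := Fintype.not_linearIndependent_iff.1 hv
  obtain ⟨b, hb⟩ := IsLocalization.exist_integer_multiples_of_finite (nonZeroDivisors F[X]) c
  choose B hB using hb
  refine ⟨n, B, fun h => hci ?_, HahnSeries.ofPowerSeries_injective (Γ := ℤ) ?_⟩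
  · have := hB i
    rw [h, Pi.zero_apply, map_zero, eq_comm, _root_.smul_eq_zero] at this
    exact this.resolve_left (nonZeroDivisors.coe_ne_zero b)
  · have hc' : ∑ i, c i • g ^ e i = 0 := by simpa [v] using congrArg Subtype.val hc
    rw [map_sum, map_zero]
    calc ∑ i, HahnSeries.ofPowerSeries ℤ F ((B i : F⟦X⟧) * f ^ e i)
        = ∑ i, ((b : F[X]) • c i) • g ^ e i := by
          refine Finset.sum_congr rfl fun i _ => ?_
          rw [map_mul, map_pow, ofPowerSeries_coe_polynomial,
            IsScalarTower.algebraMap_apply F[X] F⟮X⟯ F⸨X⸩, hB, ← Algebra.smul_def]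
      _ = 0 := by simp only [smul_assoc, ← Finset.smul_sum, hc', smul_zero]

end Algebraic

theorem Submodule.finiteDimensional_comap {K M N : Type*} [DivisionRing K] [AddCommGroup M]
    [Module K M] [AddCommGroup N] [Module K N] {g : M →ₗ[K] N} (hg : Function.Injective g)
    (V : Submodule K N) [FiniteDimensional K V] : FiniteDimensional K (V.comap g) :=
  Module.Finite.of_injective (g.restrict fun _ h => h) fun _ _ hxy =>
    Subtype.ext (hg (congrArg Subtype.val hxy))

section Kernel

variable {p : ℕ} [hp : Fact p.Prime]

theorem exists_frobenius_relation_head_ne_zero (f : (ZMod p)⟦X⟧) {T : ℕ}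
    {B : Fin (T + 1) → (ZMod p)[X]} (hB : B ≠ 0)
    (hrel : ∑ i, (B i : (ZMod p)⟦X⟧) * f ^ p ^ (i : ℕ) = 0) :
    ∃ (T : ℕ) (A : Fin (T + 1) → (ZMod p)[X]),
      A 0 ≠ 0 ∧ ∑ i, (A i : (ZMod p)⟦X⟧) * f ^ p ^ (i : ℕ) = 0 := by
  induction T with
  | zero => exact ⟨0, B, fun h => hB (funext fun i => by rwa [Fin.fin_one_eq_zero i]), hrel⟩
  | succ T ih =>
    obtain hB0 | hB0 := ne_or_eq (B 0) 0
    · exact ⟨_, B, hB0, hrel⟩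
    have hshift : ∑ j : Fin (T + 1), (B j.succ : (ZMod p)⟦X⟧) * (f ^ p ^ (j : ℕ)) ^ p = 0 := by
      simpa [Fin.sum_univ_succ, hB0, pow_succ, pow_mul] using hrel
    obtain ⟨j, hj⟩ : ∃ j : Fin (T + 1), B j.succ ≠ 0 := by
      by_contra! h
      exact hB (funext fun i => Fin.cases hB0 h i)
    obtain ⟨r, hr, hsect⟩ :=
      exists_sect_ne_zero hp.out.ne_zero (Polynomial.coe_eq_zero_iff.not.2 hj)
    choose Q _ hQ using fun k : Fin (T + 1) => exists_coe_eq_sect hp.out.ne_zero r (B k.succ)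
    refine ih (B := Q) (fun h => hsect ?_) ?_
    · rw [← hQ j, h, Pi.zero_apply, Polynomial.coe_zero]
    · simpa only [map_sum, map_zero, sectLinearMap_apply, sect_mul_pow_prime hr, hQ] using
        congrArg (sectLinearMap p r) hshift

theorem mul_sect_mem_polySpan {f : (ZMod p)⟦X⟧} {T D : ℕ}
    {A : Fin (T + 1) → (ZMod p)[X]} (hA : ∀ i, (A i).natDegree ≤ D)
    (hrel : ∑ i, (A i : (ZMod p)⟦X⟧) * f ^ p ^ (i : ℕ) = 0) {r : ℕ} (hr : r < p) {z : (ZMod p)⟦X⟧}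
    (hz : (A 0 : (ZMod p)⟦X⟧) * z ∈ polySpan D fun i : Fin (T + 1) => f ^ p ^ (i : ℕ)) :
    (A 0 : (ZMod p)⟦X⟧) * sect p r z ∈ polySpan D fun i : Fin (T + 1) => f ^ p ^ (i : ℕ) := by
  have hφ : ∀ j : Fin T, f ^ p ^ ((j.succ : Fin (T + 1)) : ℕ) = (f ^ p ^ (j.castSucc : ℕ)) ^ p :=
    fun j => by rw [Fin.val_succ, Fin.val_castSucc, pow_succ, pow_mul]
  have h := pow_pred_mul_mem_polySpan hp.out.two_le hφ hA hrel hz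
  have hexp : (fun i : Fin (T + 1) => (f ^ p ^ (i : ℕ)) ^ p) =
      fun i : Fin (T + 1) => expand p hp.out.ne_zero (f ^ p ^ (i : ℕ)) :=
    funext fun i => pow_prime_eq_expand _
  rw [← mul_assoc, ← pow_succ, Nat.sub_add_cancel hp.out.one_le, mul_comm (_ ^ p) z, hexp,
    pow_prime_eq_expand] at h
  rw [mul_comm (A 0 : (ZMod p)⟦X⟧), ← sect_mul_expand hp.out.ne_zero hr]
  exact sect_mem_polySpan hp.out.ne_zero hr h

end Kernel

/-- Forward direction of Christol's theorem via `p`-kernels: if `f ∈ F_p[[x]]` is algebraic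
over `F_p(x)` (it is a root of some nonzero `E ∈ F_p[x,y]`), then the `F_p`-span of the orbit
of `f` under all finite compositions of the section operators `S_0, …, S_{p−1}` is
finite-dimensional. -/
theorem kernel_span_finiteDimensional (p : ℕ) [Fact p.Prime]
    (f : PowerSeries (ZMod p))
    (halg : ∃ E : Polynomial (Polynomial (ZMod p)), E ≠ 0 ∧
      Polynomial.eval₂ ((Polynomial.coeToPowerSeries.ringHom : Polynomial (ZMod p) →+* PowerSeries (ZMod p))) f E = 0) :
    FiniteDimensional (ZMod p)
      (Submodule.span (ZMod p)
        {g : PowerSeries (ZMod p) | ∃ L : List ℕ, (∀ r ∈ L, r < p) ∧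
          g = L.foldl (fun z r => sect p r z) f}) := by
  obtain ⟨_, B, hB, hrelB⟩ := exists_polynomial_relation halg (p ^ ·)
  obtain ⟨T, A, hA0, hrel⟩ := exists_frobenius_relation_head_ne_zero f hB hrelB
  have hA : ∀ i, (A i).natDegree ≤ Finset.univ.sup fun i => (A i).natDegree :=
    fun i => Finset.le_sup (f := fun i => (A i).natDegree) (Finset.mem_univ i)
  set V := polySpan (Finset.univ.sup fun i => (A i).natDegree)
    fun i : Fin (T + 1) => f ^ p ^ (i : ℕ)
  set W := V.comap (LinearMap.mulLeft (ZMod p) (A 0 : (ZMod p)⟦X⟧))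
  have : FiniteDimensional (ZMod p) W := Submodule.finiteDimensional_comap
    (mul_right_injective₀ (Polynomial.coe_eq_zero_iff.not.2 hA0)) V
  refine Submodule.finiteDimensional_of_le (S₂ := W) (Submodule.span_le.2 ?_)
  rintro _ ⟨L, hL, rfl⟩
  refine foldl_sect_mem (fun r hr z hz => ?_) hL ?_
  · exact mul_sect_mem_polySpan hA hrel hr hz
  · simpa [W, V] using mul_mem_polySpan_of_sum_eq_zero hA hrel
end
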